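/- Let x₀ ~ N(μ₀, Σ₀) in ℝ^d, y = H x₀ + n with n ~ N(0, σ_y² I) independent of x₀, and x_t = √ᾱ x₀ + √(1-ᾱ) ε with ε ~ N(0, I) independent of x₀ and n. Then the maximizer of x₀ ↦ log p(x₀ | x_t, y) is x₀* = ((1-ᾱ) Σ₀ Hᵀ H + σ_y² ᾱ Σ₀ + σ_y² (1-ᾱ) I)⁻¹ ((1-ᾱ) Σ₀ Hᵀ y + σ_y² √ᾱ Σ₀ x_t + σ_y² (1-ᾱ) μ₀). -/

import Mathlib

/-! The negative log posterior is a quadratic `xᵀAx/2 - bᵀx + c` whose precision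
`A = HᵀH/σ_y² + ᾱ/(1-ᾱ) I + Σ₀⁻¹` is positive definite, so it is minimized exactly where
`A x = b`, i.e. at `A⁻¹ b`. The stated closed form is `A⁻¹ b` after multiplying both `A` and `b`
on the left by `σ_y² (1-ᾱ) Σ₀`. -/

open Matrix

namespace Matrix

variable {m n R : Type*} [Fintype m] [Fintype n] [CommRing R]

theorem sub_dotProduct_mulVec_sub {A : Matrix n n R} (hA : A.IsSymm) (x z : n → R) :
    (x - z) ⬝ᵥ A *ᵥ (x - z) = x ⬝ᵥ A *ᵥ x - 2 * (A *ᵥ z ⬝ᵥ x) + z ⬝ᵥ A *ᵥ z := by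
  have hzx : z ⬝ᵥ A *ᵥ x = A *ᵥ z ⬝ᵥ x := by
    rw [dotProduct_mulVec, ← mulVec_transpose, hA.eq]
  simp only [mulVec_sub, dotProduct_sub, sub_dotProduct, hzx, dotProduct_comm x (A *ᵥ z)]
  ring

theorem sub_mulVec_dotProduct_self (M : Matrix m n R) (v : m → R) (x : n → R) :
    (v - M *ᵥ x) ⬝ᵥ (v - M *ᵥ x) = x ⬝ᵥ (Mᵀ * M) *ᵥ x - 2 * (Mᵀ *ᵥ v ⬝ᵥ x) + v ⬝ᵥ v := by
  rw [← mulVec_mulVec, dotProduct_mulVec x, vecMul_transpose, mulVec_transpose,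
    ← dotProduct_mulVec]
  simp only [dotProduct_sub, sub_dotProduct, dotProduct_comm (M *ᵥ x) v]
  ring

theorem inv_mul_mulVec_mulVec [DecidableEq n] {T : Matrix n n R} (hT : IsUnit T.det)
    (A : Matrix n n R) (b : n → R) : (T * A)⁻¹ *ᵥ (T *ᵥ b) = A⁻¹ *ᵥ b := by
  rw [mul_inv_rev, mulVec_mulVec, Matrix.mul_assoc, nonsing_inv_mul _ hT, Matrix.mul_one]

theorem PosSemidef.half_dotProduct_mulVec_sub_le {A : Matrix n n ℝ} (hA : A.PosSemidef)
    (z x : n → ℝ) :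
    z ⬝ᵥ A *ᵥ z / 2 - A *ᵥ z ⬝ᵥ z ≤ x ⬝ᵥ A *ᵥ x / 2 - A *ᵥ z ⬝ᵥ x := by
  have hsq := hA.dotProduct_mulVec_nonneg (x - z)
  rw [star_trivial, sub_dotProduct_mulVec_sub (isHermitian_iff_isSymm.mp hA.isHermitian)] at hsq
  rw [dotProduct_comm (A *ᵥ z) z]
  linarith

end Matrix

section GaussianPosterior

variable {m n : Type*} [Fintype m] [Fintype n] [DecidableEq n]
  (μ₀ : n → ℝ) (S0 : Matrix n n ℝ) (H : Matrix m n ℝ) (σy abar : ℝ) (y : m → ℝ) (xt : n → ℝ)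

noncomputable def negLogPosterior (x : n → ℝ) : ℝ :=
  (1 / (2 * σy ^ 2)) * ((y - H.mulVec x) ⬝ᵥ (y - H.mulVec x))
    + (1 / (2 * (1 - abar))) * ((xt - Real.sqrt abar • x) ⬝ᵥ (xt - Real.sqrt abar • x))
    + (1 / 2) * ((x - μ₀) ⬝ᵥ S0⁻¹.mulVec (x - μ₀))

noncomputable def posteriorPrecision : Matrix n n ℝ :=
  (σy ^ 2)⁻¹ • (Hᵀ * H) + (abar / (1 - abar)) • 1 + S0⁻¹

noncomputable def posteriorInformation : n → ℝ :=
  (σy ^ 2)⁻¹ • Hᵀ *ᵥ y + (Real.sqrt abar / (1 - abar)) • xt + S0⁻¹ *ᵥ μ₀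

variable {μ₀ S0 H σy abar y xt}

theorem posteriorPrecision_posDef (hS0 : S0.PosDef) (hα0 : 0 ≤ abar) (hα1 : abar < 1) :
    (posteriorPrecision S0 H σy abar).PosDef := by
  have hHH : (Hᵀ * H).PosSemidef := by
    simpa [conjTranspose_eq_transpose_of_trivial] using posSemidef_conjTranspose_mul_self H
  refine PosDef.posSemidef_add (PosSemidef.add ?_ ?_) hS0.inv
  · exact hHH.smul (by positivity)
  · exact PosSemidef.one.smul (div_nonneg hα0 (by linarith))

theorem negLogPosterior_eq (hS0 : S0.IsSymm) (hα0 : 0 ≤ abar) (x : n → ℝ) :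
    negLogPosterior μ₀ S0 H σy abar y xt x =
      x ⬝ᵥ posteriorPrecision S0 H σy abar *ᵥ x / 2
        - posteriorInformation μ₀ S0 H σy abar y xt ⬝ᵥ x
        + (y ⬝ᵥ y / (2 * σy ^ 2) + xt ⬝ᵥ xt / (2 * (1 - abar)) + μ₀ ⬝ᵥ S0⁻¹ *ᵥ μ₀ / 2) := by
  have hsqrt : Real.sqrt abar ^ 2 = abar := Real.sq_sqrt hα0
  have hxt : (xt - Real.sqrt abar • x) ⬝ᵥ (xt - Real.sqrt abar • x)
      = abar * (x ⬝ᵥ x) - 2 * Real.sqrt abar * (xt ⬝ᵥ x) + xt ⬝ᵥ xt := by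
    simp only [dotProduct_sub, sub_dotProduct, dotProduct_smul, smul_dotProduct, smul_eq_mul,
      dotProduct_comm x xt]
    linear_combination (x ⬝ᵥ x) * hsqrt
  rw [negLogPosterior, posteriorPrecision, posteriorInformation, sub_mulVec_dotProduct_self, hxt,
    sub_dotProduct_mulVec_sub hS0.inv]
  simp only [add_mulVec, smul_mulVec, one_mulVec, dotProduct_add, add_dotProduct,
    dotProduct_smul, smul_dotProduct, smul_eq_mul, div_eq_mul_inv, one_mul, mul_inv]
  ring

theorem smul_mul_posteriorPrecision (hS0 : IsUnit S0.det) (hσ : σy ≠ 0) (hα1 : abar ≠ 1) :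
    ((σy ^ 2 * (1 - abar)) • S0) * posteriorPrecision S0 H σy abar =
      (1 - abar) • (S0 * Hᵀ * H) + (σy ^ 2 * abar) • S0
        + (σy ^ 2 * (1 - abar)) • (1 : Matrix n n ℝ) := by
  have h1 : 1 - abar ≠ 0 := sub_ne_zero.mpr hα1.symm
  rw [posteriorPrecision, smul_mul_assoc, Matrix.mul_add, Matrix.mul_add, Matrix.mul_smul,
    Matrix.mul_smul, Matrix.mul_one, mul_nonsing_inv _ hS0, Matrix.mul_assoc]
  match_scalars <;> field_simp

theorem smul_mulVec_posteriorInformation (hS0 : IsUnit S0.det) (hσ : σy ≠ 0) (hα1 : abar ≠ 1) :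
    ((σy ^ 2 * (1 - abar)) • S0) *ᵥ posteriorInformation μ₀ S0 H σy abar y xt =
      (1 - abar) • (S0 * Hᵀ).mulVec y + (σy ^ 2 * Real.sqrt abar) • S0.mulVec xt
        + (σy ^ 2 * (1 - abar)) • μ₀ := by
  have h1 : 1 - abar ≠ 0 := sub_ne_zero.mpr hα1.symm
  rw [posteriorInformation, smul_mulVec, mulVec_add, mulVec_add, mulVec_smul, mulVec_smul,
    mulVec_mulVec, mulVec_mulVec, mul_nonsing_inv _ hS0, one_mulVec]
  match_scalars <;> field_simp

end GaussianPosterior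

/-- the MAP estimator of `x₀` given `(x_t, y)` under a Gaussian prior, linear
Gaussian measurements and the diffusion forward marginal. The negative log posterior is
(up to additive constants)
`(1/(2σ_y²))‖y - H x₀‖² + (1/(2(1-ᾱ)))‖x_t - √ᾱ x₀‖² + (1/2)(x₀-μ₀)ᵀ Σ₀⁻¹ (x₀-μ₀)`,
and its minimizer is the stated closed form. -/
theorem map_estimator_posterior
    (d m : ℕ) (μ₀ : Fin d → ℝ) (S0 : Matrix (Fin d) (Fin d) ℝ) (hS0 : S0.PosDef)
    (H : Matrix (Fin m) (Fin d) ℝ) (σy : ℝ) (hσ : 0 < σy)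
    (abar : ℝ) (hα0 : 0 < abar) (hα1 : abar < 1)
    (y : Fin m → ℝ) (xt : Fin d → ℝ)
    (negLogPost : (Fin d → ℝ) → ℝ)
    (hf : negLogPost = fun x =>
      (1 / (2 * σy ^ 2)) * ((y - H.mulVec x) ⬝ᵥ (y - H.mulVec x))
      + (1 / (2 * (1 - abar))) *
          ((xt - Real.sqrt abar • x) ⬝ᵥ (xt - Real.sqrt abar • x))
      + (1 / 2) * ((x - μ₀) ⬝ᵥ S0⁻¹.mulVec (x - μ₀)))
    (xstar : Fin d → ℝ)
    (hxstar : xstar =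
      ((1 - abar) • (S0 * Hᵀ * H) + (σy ^ 2 * abar) • S0
        + (σy ^ 2 * (1 - abar)) • (1 : Matrix (Fin d) (Fin d) ℝ))⁻¹.mulVec
        ((1 - abar) • (S0 * Hᵀ).mulVec y + (σy ^ 2 * Real.sqrt abar) • S0.mulVec xt
          + (σy ^ 2 * (1 - abar)) • μ₀)) :
    ∀ x : Fin d → ℝ, negLogPost xstar ≤ negLogPost x := by
  obtain rfl : negLogPost = negLogPosterior μ₀ S0 H σy abar y xt := hf
  set A := posteriorPrecision S0 H σy abar
  have hA : A.PosDef := posteriorPrecision_posDef hS0 hα0.le hα1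
  have hS0det : IsUnit S0.det := (isUnit_iff_isUnit_det S0).mp hS0.isUnit
  have hT : ((σy ^ 2 * (1 - abar)) • S0).PosDef :=
    hS0.smul (mul_pos (pow_pos hσ 2) (sub_pos.mpr hα1))
  have hsolve : A *ᵥ xstar = posteriorInformation μ₀ S0 H σy abar y xt := by
    rw [hxstar, ← smul_mul_posteriorPrecision hS0det hσ.ne' hα1.ne,
      ← smul_mulVec_posteriorInformation hS0det hσ.ne' hα1.ne,
      inv_mul_mulVec_mulVec ((isUnit_iff_isUnit_det _).mp hT.isUnit), mulVec_mulVec,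
      mul_nonsing_inv _ ((isUnit_iff_isUnit_det _).mp hA.isUnit), one_mulVec]
  have hS0symm : S0.IsSymm := isHermitian_iff_isSymm.mp hS0.isHermitian
  intro x
  rw [negLogPosterior_eq hS0symm hα0.le, negLogPosterior_eq hS0symm hα0.le, ← hsolve]
  linarith [hA.posSemidef.half_dotProduct_mulVec_sub_le xstar x]
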